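/- Let n and B be powers of two with B < n, let F ≥ 2 be an even integer, set ε = (1/4)^{F−1}, let Ĝ be a flat filter with B buckets and sharpness F, and let (σ_r, b_r), r ∈ [d], be hashings with each σ_r odd such that for all f ≠ f' in [n], Σ_{r∈[d]} Ĝ_{o_{f,r}(f)}^{−1}·Ĝ_{o_{f,r}(f')} ≤ 2d/B. Then for every x ∈ ℂ^n and every f ∈ [n], the number of indices r ∈ [d] satisfying |Σ_{f'≠f} Ĝ_{o_{f,r}(f')}·x̂_{f'}| ≤ (10/((1−ε)·B))·Σ_{f'≠f}|x̂_{f'}| is at least 8d/10. -/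

import Mathlib

open Finset

/-- The (integer) rounded bucket index `round((B/n)·π_{σ,b}(f))`, where
`π_{σ,b}(f) = σ(f-b) mod n`. -/
noncomputable def hround (n B : ℕ) (σ b f : ZMod n) : ℤ :=
  round ((B : ℝ) / (n : ℝ) * (((σ * (f - b)).val : ℕ) : ℝ))

/-- The offset `o_{f,σ,b}(f') = π_{σ,b}(f') - (n/B)·h_{σ,b}(f)  (mod n)`. -/
noncomputable def offset (n B : ℕ) (σ b f f' : ZMod n) : ZMod n :=
  σ * (f' - b) - ((n / B : ℕ) : ZMod n) * ((hround n B σ b f : ℤ) : ZMod n)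

/-- The representative of `ℓ ∈ Z_n` in `(-n/2, n/2]`. -/
def rep (n : ℕ) (ℓ : ZMod n) : ℤ :=
  if (ℓ.val : ℤ) ≤ (n : ℤ) / 2 then (ℓ.val : ℤ) else (ℓ.val : ℤ) - (n : ℤ)

/-- A flat filter with `B` buckets and sharpness `F`. -/
def IsFlatFilter (n B F : ℕ) (G : ZMod n → ℝ) : Prop :=
  (∀ f : ZMod n, G (-f) = G f) ∧
  (∀ f : ZMod n, 0 ≤ G f ∧ G f ≤ 1) ∧
  (∀ f : ZMod n, (|rep n f| : ℝ) ≤ (n : ℝ) / (2 * B) → 1 - (1 / 4 : ℝ) ^ (F - 1) ≤ G f) ∧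
  (∀ f : ZMod n, (n : ℝ) / B ≤ (|rep n f| : ℝ) →
    G f ≤ (1 / 4 : ℝ) ^ (F - 1) * ((n : ℝ) / (B * (|rep n f| : ℝ))) ^ (F - 1))

/-- Discrete Fourier transform on `Z_n`. -/
noncomputable def dftZ (n : ℕ) [NeZero n] (x : ZMod n → ℂ) : ZMod n → ℂ := fun f =>
  (1 / (Real.sqrt n) : ℂ) *
    ∑ j : ZMod n, x j * Complex.exp (2 * (Real.pi : ℂ) * Complex.I *
      ((j.val * f.val : ℕ) : ℂ) / (n : ℂ))

/-- The value `(m_r)_{h_r(f)}` of the `r`-th measurement vector at bucket `h_r(f)`: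
`∑_{f'} Ĝ_{o_{f,σ,b}(f')} x̂_{f'}`. -/
noncomputable def measAt (n B : ℕ) [NeZero n] (G : ZMod n → ℝ) (σ b f : ZMod n)
    (xhat : ZMod n → ℂ) : ℂ :=
  ∑ f' : ZMod n, (G (offset n B σ b f f') : ℂ) * xhat f'

/-- Uniform sample space of hashing pairs `(σ, b)` with `σ` odd. -/
def hashPairs (n : ℕ) [NeZero n] : Finset (ZMod n × ZMod n) :=
  (Finset.univ.filter fun σ : ZMod n => Odd σ.val) ×ˢ Finset.univ


lemma abs_rep_intCast (n : ℕ) [NeZero n] (w : ℤ) (h : 2 * |w| ≤ (n : ℤ)) :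
    |rep n ((w : ZMod n))| = |w| := by
  have hn : 0 < (n : ℤ) := by exact_mod_cast Nat.pos_of_ne_zero (NeZero.ne n)
  have h1 : -(n:ℤ) ≤ 2 * w := by cases abs_cases w <;> omega
  have h2 : 2 * w ≤ (n:ℤ) := by cases abs_cases w <;> omega
  have hv : (((w : ZMod n)).val : ℤ) = w % n := ZMod.val_intCast w
  have hmod : w % n = w ∨ w % n = w + n := by
    rcases le_or_gt 0 w with h0 | h0
    · left; exact Int.emod_eq_of_lt h0 (by omega)
    · right
      have h3 : (w + n) % n = w % n := by
        have := Int.add_mul_emod_self_left (a := w) (b := (n:ℤ)) (c := 1)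
        simpa using this
      rw [← h3]; exact Int.emod_eq_of_lt (by omega) (by omega)
  have key : rep n ((w : ZMod n)) = w ∨ rep n ((w : ZMod n)) = -w := by
    unfold rep
    rw [hv]
    split_ifs with hif <;> omega
  rcases key with k | k <;> simp [k, abs_neg]

lemma offset_self_eq (n B : ℕ) [NeZero n] (σ b f : ZMod n) :
    offset n B σ b f f =
      ((((σ * (f - b)).val : ℤ) - ((n / B : ℕ) : ℤ) * hround n B σ b f : ℤ) : ZMod n) := by
  unfold offset
  have h1 : (((σ * (f - b)).val : ℤ) : ZMod n) = σ * (f - b) := by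
    rw [Int.cast_natCast, ZMod.natCast_val, ZMod.cast_id]
  rw [Int.cast_sub, Int.cast_mul, h1, Int.cast_natCast]

lemma offset_self_bound (n B : ℕ) [NeZero n] (hB0 : 0 < B) (hdvd : B ∣ n) (σ b f : ZMod n) :
    2 * |((σ * (f - b)).val : ℤ) - ((n / B : ℕ) : ℤ) * hround n B σ b f| ≤ ((n / B : ℕ) : ℤ) := by
  obtain ⟨k, hk⟩ := hdvd
  have hM : n / B = k := by rw [hk, Nat.mul_div_cancel_left k hB0]
  rw [hM]
  have hn : 0 < (n : ℝ) := by
    have := Nat.pos_of_ne_zero (NeZero.ne n); exact_mod_cast this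
  have hB : 0 < (B : ℝ) := by exact_mod_cast hB0
  have hnk : (n : ℝ) = (B : ℝ) * k := by exact_mod_cast congrArg (Nat.cast : ℕ → ℝ) hk
  have hkr : (k : ℝ) = (n : ℝ) / B := by rw [hnk]; field_simp
  set v : ℝ := (((σ * (f - b)).val : ℕ) : ℝ) with hv
  set h : ℤ := hround n B σ b f with hh
  have hround_bd : |(B : ℝ) / n * v - (h : ℝ)| ≤ 1 / 2 := abs_sub_round _
  have hid : v - (k : ℝ) * (h : ℝ) = ((n : ℝ) / B) * ((B : ℝ) / n * v - (h : ℝ)) := by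
    rw [hkr]; field_simp
  have hreal : |v - (k : ℝ) * (h : ℝ)| ≤ (k : ℝ) / 2 := by
    rw [hid, abs_mul, abs_of_pos (show (0:ℝ) < (n:ℝ)/B by positivity), hkr]
    calc (n : ℝ) / B * |(B : ℝ) / n * v - (h : ℝ)| ≤ (n : ℝ) / B * (1 / 2) :=
          mul_le_mul_of_nonneg_left hround_bd (by positivity)
      _ = ((n : ℝ) / B) / 2 := by ring
  have key : ((2 * |((σ * (f - b)).val : ℤ) - (k : ℤ) * h| : ℤ) : ℝ) ≤ ((k : ℤ) : ℝ) := by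
    push_cast
    rw [← hv]
    linarith [hreal]
  exact_mod_cast key

/-- Low noise in most buckets: under the hash-family constraint
`∑_r Ĝ_{o_{f,r}(f)}⁻¹ Ĝ_{o_{f,r}(f')} ≤ 2d/B` (for all `f ≠ f'`), for every `x` and `f`,
at least `8d/10` of the repetitions `r` satisfy
`|∑_{f'≠f} Ĝ_{o_{f,r}(f')} x̂_{f'}| ≤ (10/((1-ε)B)) ∑_{f'≠f} |x̂_{f'}|`, where
`ε = (1/4)^{F-1}`. -/
theorem low_noise_most_repetitions
    (n B : ℕ) [NeZero n] (ha : ∃ a, n = 2 ^ a) (hb : ∃ c, B = 2 ^ c) (hBn : B < n)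
    (F : ℕ) (hF : 2 ≤ F) (hFeven : Even F)
    (G : ZMod n → ℝ) (hG : IsFlatFilter n B F G)
    (d : ℕ) (σ bb : Fin d → ZMod n) (hσ : ∀ r, Odd (σ r).val)
    (hyp : ∀ f f' : ZMod n, f ≠ f' →
      ∑ r : Fin d, (G (offset n B (σ r) (bb r) f f))⁻¹ *
        G (offset n B (σ r) (bb r) f f') ≤ 2 * d / B) :
    ∀ x : ZMod n → ℂ, ∀ f : ZMod n,
      (8 * (d : ℝ) / 10) ≤
        ((Finset.univ.filter (fun r : Fin d =>
          ‖(∑ f' ∈ Finset.univ.erase f,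
              ((G (offset n B (σ r) (bb r) f f') : ℝ) : ℂ) * dftZ n x f')‖ ≤
          10 / ((1 - (1 / 4 : ℝ) ^ (F - 1)) * B) *
            ∑ f' ∈ Finset.univ.erase f, ‖dftZ n x f'‖)).card : ℝ) := by
  classical
  intro x f
  -- basic positivity facts
  have hB0 : 0 < B := by obtain ⟨c, rfl⟩ := hb; positivity
  have hn0 : 0 < n := Nat.pos_of_ne_zero (NeZero.ne n)
  have hdvd : B ∣ n := by
    obtain ⟨a, rfl⟩ := ha; obtain ⟨c, rfl⟩ := hb
    exact pow_dvd_pow 2 (le_of_lt ((Nat.pow_lt_pow_iff_right (by norm_num)).mp hBn))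
  have hBr : (0:ℝ) < B := by exact_mod_cast hB0
  have hnr : (0:ℝ) < n := by exact_mod_cast hn0
  set ε : ℝ := (1/4 : ℝ) ^ (F - 1) with hεdef
  have hε : ε ≤ 1/4 := by
    calc ε ≤ (1/4 : ℝ) ^ 1 := pow_le_pow_of_le_one (by norm_num) (by norm_num) (by omega)
      _ = 1/4 := pow_one _
  have hε1 : (0:ℝ) < 1 - ε := by linarith
  -- G at the self-offset is large
  have hGself : ∀ r : Fin d, 1 - ε ≤ G (offset n B (σ r) (bb r) f f) := by
    intro r
    apply hG.2.2.1
    rw [offset_self_eq]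
    have hb2 := offset_self_bound n B hB0 hdvd (σ r) (bb r) f
    have hmn : (n / B : ℕ) ≤ n := Nat.div_le_self n B
    rw [← Int.cast_abs, abs_rep_intCast n _ (by exact_mod_cast le_trans hb2 (by exact_mod_cast hmn))]
    obtain ⟨k, hk⟩ := hdvd
    have hM : n / B = k := by rw [hk, Nat.mul_div_cancel_left k hB0]
    have hkr : (k : ℝ) = (n : ℝ) / B := by
      rw [show ((n:ℕ):ℝ) = ((B:ℕ):ℝ) * k by exact_mod_cast congrArg (Nat.cast : ℕ → ℝ) hk]
      field_simp
    rw [hM] at hb2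
    have hb3 : ((2 * |((σ r * (f - bb r)).val : ℤ) - ((n / B : ℕ) : ℤ) * hround n B (σ r) (bb r) f| : ℤ) : ℝ)
        ≤ ((k : ℤ) : ℝ) := by exact_mod_cast (by rw [hM]; exact hb2)
    rw [Int.cast_mul] at hb3
    rw [show (n:ℝ) / (2 * B) = ((n:ℝ)/B)/2 by ring, ← hkr]
    have : ((2:ℤ):ℝ) = (2:ℝ) := by norm_num
    rw [this] at hb3
    have hkk : ((k:ℤ):ℝ) = (k:ℝ) := by push_cast; ring
    rw [hkk] at hb3
    linarith
  have hGpos : ∀ r, 0 < G (offset n B (σ r) (bb r) f f) := fun r => lt_of_lt_of_le hε1 (hGself r)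
  have hGinv : ∀ r, 1 ≤ (G (offset n B (σ r) (bb r) f f))⁻¹ := fun r =>
    (one_le_inv₀ (hGpos r)).mpr (hG.2.1 _).2
  set S : ℝ := ∑ f' ∈ Finset.univ.erase f, ‖dftZ n x f'‖ with hSdef
  have hS0 : 0 ≤ S := Finset.sum_nonneg fun _ _ => norm_nonneg _
  set N : Fin d → ℝ := fun r =>
    ∑ f' ∈ Finset.univ.erase f, G (offset n B (σ r) (bb r) f f') * ‖dftZ n x f'‖
    with hNdef
  have hNnn : ∀ r, 0 ≤ N r := fun r =>
    Finset.sum_nonneg fun f' _ => mul_nonneg (hG.2.1 _).1 (norm_nonneg _)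
  have habsle : ∀ r, ‖(∑ f' ∈ Finset.univ.erase f,
      ((G (offset n B (σ r) (bb r) f f') : ℝ) : ℂ) * dftZ n x f')‖ ≤ N r := by
    intro r
    refine (norm_sum_le _ _).trans (le_of_eq (Finset.sum_congr rfl fun f' _ => ?_))
    rw [norm_mul, Complex.norm_real, Real.norm_eq_abs, abs_of_nonneg (hG.2.1 _).1]
  have hsumN : ∑ r, N r ≤ 2 * d / B * S := by
    rw [hNdef]
    rw [Finset.sum_comm]
    rw [hSdef, Finset.mul_sum]
    refine Finset.sum_le_sum fun f' hf' => ?_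
    rw [← Finset.sum_mul]
    have hne : f ≠ f' := (Finset.ne_of_mem_erase hf').symm
    refine mul_le_mul_of_nonneg_right ?_ (norm_nonneg _)
    calc ∑ r, G (offset n B (σ r) (bb r) f f')
        ≤ ∑ r, (G (offset n B (σ r) (bb r) f f))⁻¹ * G (offset n B (σ r) (bb r) f f') :=
          Finset.sum_le_sum fun r _ => le_mul_of_one_le_left (hG.2.1 _).1 (hGinv r)
      _ ≤ 2 * d / B := hyp f f' hne
  set P : Fin d → Prop := fun r =>
    ‖(∑ f' ∈ Finset.univ.erase f,
        ((G (offset n B (σ r) (bb r) f f') : ℝ) : ℂ) * dftZ n x f')‖ ≤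
      10 / ((1 - ε) * B) * S with hPdef
  rcases eq_or_lt_of_le hS0 with hS | hS
  · -- S = 0 : every repetition works
    have hall : ∀ r : Fin d, r ∈ Finset.univ → P r := by
      intro r _
      have hzero : ∀ f' ∈ Finset.univ.erase f, dftZ n x f' = 0 := by
        intro f' hf'
        have := (Finset.sum_eq_zero_iff_of_nonneg
          (fun g _ => norm_nonneg (dftZ n x g))).mp hS.symm f' hf'
        exact norm_eq_zero.mp this
      show ‖(∑ f' ∈ Finset.univ.erase f,
          ((G (offset n B (σ r) (bb r) f f') : ℝ) : ℂ) * dftZ n x f')‖ ≤ 10 / ((1 - ε) * B) * S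
      rw [Finset.sum_congr rfl (fun f' hf' => by rw [hzero f' hf', mul_zero]), ← hS]
      simp
    rw [Finset.filter_true_of_mem hall]
    simp only [Finset.card_univ, Fintype.card_fin]
    have : (0:ℝ) ≤ d := Nat.cast_nonneg d
    linarith
  · -- S > 0 : Markov bound on bad repetitions
    set bad := Finset.univ.filter (fun r => ¬ P r) with hbaddef
    have hbadbound : ∀ r ∈ bad, 10 / B * S ≤ N r := by
      intro r hr
      rw [hbaddef, Finset.mem_filter] at hr
      have h1 : 10 / ((1 - ε) * B) * S < N r :=
        lt_of_lt_of_le (not_le.mp hr.2) (habsle r)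
      have h2 : 10 / B * S ≤ 10 / ((1 - ε) * B) * S := by
        have hεnn : (0:ℝ) ≤ ε := by rw [hεdef]; positivity
        apply mul_le_mul_of_nonneg_right _ hS0
        apply div_le_div_of_nonneg_left (by norm_num) (by positivity)
        nlinarith [mul_nonneg hεnn hBr.le]
      linarith
    have hcard : (bad.card : ℝ) * (10 / B * S) ≤ 2 * d / B * S := by
      have h1 := Finset.card_nsmul_le_sum bad N (10 / B * S) hbadbound
      rw [nsmul_eq_mul] at h1
      have h2 : ∑ r ∈ bad, N r ≤ ∑ r, N r :=
        Finset.sum_le_sum_of_subset_of_nonneg (Finset.subset_univ _) (fun r _ _ => hNnn r)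
      linarith
    have hbadcard : (bad.card : ℝ) ≤ d / 5 := by
      have hpos : (0:ℝ) < 10 / B * S := by positivity
      rw [← le_div_iff₀ hpos] at hcard
      calc (bad.card : ℝ) ≤ 2 * d / B * S / (10 / B * S) := hcard
        _ = d / 5 := by field_simp; ring
    have hsplit : (Finset.univ.filter P).card + bad.card = d := by
      rw [hbaddef, Finset.card_filter_add_card_filter_not, Finset.card_univ,
        Fintype.card_fin]
    have : ((Finset.univ.filter P).card : ℝ) = d - bad.card := by
      have := congrArg (Nat.cast : ℕ → ℝ) hsplit
      push_cast at this
      linarith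
    rw [this]
    linarith
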